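/- Let S be an exchange independent set of a graph G under Δ-convexity with |S| ≥ 3. Then no three vertices of S form a triangle in G. -/
import Mathlib


variable {V : Type*}

/-- `S` is Δ-convex: no vertex outside `S` is adjacent to two adjacent vertices of `S`. -/
def DeltaConvex (G : SimpleGraph V) (S : Set V) : Prop :=
  ∀ ⦃w u v : V⦄, u ∈ S → v ∈ S → G.Adj u v → G.Adj w u → G.Adj w v → w ∈ S

/-- The Δ-convex hull of `S`: the smallest Δ-convex set containing `S`. -/
def deltaHull (G : SimpleGraph V) (S : Set V) : Set V :=
  ⋂₀ {T : Set V | S ⊆ T ∧ DeltaConvex G T}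

/-- `S` is exchange independent for Δ-convexity. -/
def EIndep [DecidableEq V] (G : SimpleGraph V) (S : Finset V) : Prop :=
  S.card = 1 ∨ ∃ p ∈ S, ∃ q ∈ deltaHull G ↑(S.erase p),
    ∀ a ∈ S.erase p, q ∉ deltaHull G ↑(S.erase a)

/-- The exchange number of `G` for Δ-convexity. -/
noncomputable def deltaExchangeNumber [DecidableEq V] [Fintype V]
    (G : SimpleGraph V) : ℕ :=
  sSup {n : ℕ | ∃ S : Finset V, EIndep G S ∧ S.card = n}

lemma subset_deltaHull (G : SimpleGraph V) (S : Set V) : S ⊆ deltaHull G S := by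
  intro x hx T hT
  exact hT.1 hx

lemma deltaHull_convex (G : SimpleGraph V) (S : Set V) : DeltaConvex G (deltaHull G S) := by
  intro w u v hu hv huv hwu hwv T hT
  exact hT.2 (hu T hT) (hv T hT) huv hwu hwv

lemma deltaHull_min (G : SimpleGraph V) {S T : Set V} (hST : S ⊆ T) (hT : DeltaConvex G T) :
    deltaHull G S ⊆ T := fun x hx => hx T ⟨hST, hT⟩

theorem stmt_11 [Fintype V] [DecidableEq V] (G : SimpleGraph V) (S : Finset V)
    (hS : EIndep G S) (h3 : 3 ≤ S.card) :
    ∀ u ∈ S, ∀ v ∈ S, ∀ w ∈ S, ¬(G.Adj u v ∧ G.Adj v w ∧ G.Adj u w) := by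
  rcases hS with h1 | ⟨p, hp, q, hq, hmin⟩
  · omega
  intro u hu v hv w hw ⟨huv, hvw, huw⟩
  -- pick a triangle vertex a ≠ p, with the other two b c
  obtain ⟨a, b, c, haS, hbS, hcS, hap, hbc, hab, hac⟩ :
      ∃ a b c, a ∈ S ∧ b ∈ S ∧ c ∈ S ∧ a ≠ p ∧ G.Adj b c ∧ G.Adj a b ∧ G.Adj a c := by
    by_cases hup : u = p
    · exact ⟨v, u, w, hv, hu, hw, fun h => huv.ne (hup.trans h.symm), huw, huv.symm, hvw⟩
    · exact ⟨u, v, w, hu, hv, hw, hup, hvw, huv, huw⟩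
  have haerase : a ∈ S.erase p := Finset.mem_erase.mpr ⟨hap, haS⟩
  apply hmin a haerase
  -- show q ∈ deltaHull G (S.erase a)
  have hhull := deltaHull_convex G (↑(S.erase a) : Set V)
  have hb' : b ∈ deltaHull G (↑(S.erase a) : Set V) :=
    subset_deltaHull G _ (by simpa using ⟨hbS, hab.ne'⟩)
  have hc' : c ∈ deltaHull G (↑(S.erase a) : Set V) :=
    subset_deltaHull G _ (by simpa using ⟨hcS, hac.ne'⟩)
  have ha' : a ∈ deltaHull G (↑(S.erase a) : Set V) := hhull hb' hc' hbc hab hac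
  have hSsub : (↑S : Set V) ⊆ deltaHull G (↑(S.erase a) : Set V) := by
    intro x hx
    by_cases hxa : x = a
    · exact hxa ▸ ha'
    · exact subset_deltaHull G _ (by simpa using ⟨by simpa using hx, hxa⟩)
  have : deltaHull G (↑(S.erase p) : Set V) ⊆ deltaHull G (↑(S.erase a) : Set V) :=
    deltaHull_min G (fun x hx => hSsub (by simpa using (by simpa using hx : x ∈ S ∧ x ≠ p).1)) hhull
  exact this hq
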